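/- arXiv:2510.03946 — 2 statements merged into one kernel-verified Lean document; each statement's English description precedes it below -/
import Mathlib

section
/- Let A be a commutative local ring whose residue field k = A/m_A has more than 3 elements. Equip the additive group of A with the action of the unit group A^× given by a · x = a²x. Then the group homology H_i(A^×, A) vanishes for every i ≥ 0 (in particular the coinvariants A_{A^×} = H_0(A^×, A) are zero). -/
/-!
For a commutative group `G` and `g ∈ G`, `x ↦ g • x - x` is a natural endomorphism of every
`G`-representation, and the coinvariants functor kills it. Applied degreewise to a projective
resolution, it therefore induces zero on every left derived functor of the coinvariants; where it
is invertible, those derived functors vanish. On `A` with the action `a • x = a² x`, a unit `u`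
acts by `x ↦ (u² - 1) x`, and `u² - 1` is a unit as soon as `u` lifts a residue class other than
`0, 1, -1`, which exists because the residue field has more than three elements.
-/

open CategoryTheory

noncomputable section

namespace SchurPaper

variable (k G : Type) [CommRing k] [Group G]

/-- The underlying linear map of a morphism of representations. -/
def homL {M N : Rep k G} (f : M ⟶ N) : (M : Type) →ₗ[k] (N : Type) := f.hom

@[simp] lemma homL_apply {M N : Rep k G} (f : M ⟶ N) (x : M) : homL k G f x = f.hom x := rfl

/-- The submodule of `M` generated by the elements `ρ(g)(m) - m`; the coinvariants of the
representation `M` are the quotient of `M` by this submodule. -/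
def coinvRel (M : Rep k G) : Submodule k M :=
  Submodule.span k (Set.range fun gm : G × M => M.ρ gm.1 gm.2 - gm.2)

lemma coinvRel_le {M N : Rep k G} (f : M ⟶ N) :
    coinvRel k G M ≤ (coinvRel k G N).comap (homL k G f) := by
  rw [coinvRel, Submodule.span_le]
  rintro x ⟨⟨g, m⟩, rfl⟩
  simp only [Set.mem_preimage, SetLike.mem_coe, Submodule.mem_comap, map_sub, homL_apply]
  rw [Rep.hom_comm_apply]
  exact Submodule.subset_span ⟨(g, f.hom m), rfl⟩

/-- The coinvariants functor `Rep k G ⥤ ModuleCat k`, sending a representation `M` to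
its module of coinvariants `M_G = H₀(G, M)`. -/
def coinvFunctor : Rep k G ⥤ ModuleCat k where
  obj M := ModuleCat.of k (M ⧸ coinvRel k G M)
  map {M N} f := ModuleCat.ofHom (Submodule.mapQ _ _ (homL k G f) (coinvRel_le k G f))
  map_id M := by
    apply ModuleCat.hom_ext
    apply Submodule.linearMap_qext
    ext x
    simp [Submodule.mapQ_apply, homL]
  map_comp f g := by
    apply ModuleCat.hom_ext
    apply Submodule.linearMap_qext
    ext x
    simp [Submodule.mapQ_apply, homL]

instance : (coinvFunctor k G).Additive where
  map_add := by
    intros X Y f g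
    apply ModuleCat.hom_ext
    apply Submodule.linearMap_qext
    ext x
    rfl

/-- The chain complex computing the homology of `G` with (trivial) coefficients in `k`:
the coinvariants of the standard projective resolution of `k` as a trivial
`G`-representation. -/
def stdComplex : ChainComplex (ModuleCat k) ℕ :=
  ((coinvFunctor k G).mapHomologicalComplex (ComplexShape.down ℕ)).obj
    (Rep.standardComplex k G)

/-- The `n`-th homology of the group `G` with trivial coefficients in `k`, defined as
the `n`-th homology of the complex of coinvariants of the standard projective resolution
of `k` over `k[G]`.  For `k = ℤ`, `groupHomology ℤ G 2` is the Schur multiplier of `G`. -/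
def groupHomology (n : ℕ) : ModuleCat k :=
  (stdComplex k G).homology n

end SchurPaper


open SchurPaper

/-- The representation of the unit group `Aˣ` on the additive group of `A` given by
`a · x = a² x`. -/
def squareRep (A : Type) [CommRing A] : Representation ℤ Aˣ A where
  toFun g := LinearMap.mulLeft ℤ ((g : A) ^ 2)
  map_one' := by
    ext x
    simp
  map_mul' g h := by
    ext x
    simp only [LinearMap.mulLeft_apply, Module.End.mul_apply, Units.val_mul]
    ring

namespace CategoryTheory.Functor

open Limits

variable {C D : Type*} [Category C] [Abelian C] [HasProjectiveResolutions C] [Category D]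
  [Abelian D] (F : C ⥤ D) [F.Additive]

theorem leftDerived_map_app_eq_zero (θ : 𝟭 C ⟶ 𝟭 C) (hθ : ∀ X, F.map (θ.app X) = 0)
    (n : ℕ) (X : C) : (F.leftDerived n).map (θ.app X) = 0 := by
  let P := projectiveResolution X
  -- `θ` applied degreewise is a chain map lifting `θ.app X`, and `F` kills it.
  let φ : P.complex ⟶ P.complex :=
    { f := fun m => θ.app (P.complex.X m)
      comm' := fun _ _ _ => (θ.naturality _).symm }
  have hφ : (F.mapHomologicalComplex _).map φ = 0 := by
    ext m
    exact hθ _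
  have := P.isoLeftDerivedObj_hom_naturality (θ.app X) P φ (θ.naturality (P.π.f 0)).symm F n
  rwa [comp_map, hφ, Functor.map_zero, comp_zero, ← zero_comp (f := (P.isoLeftDerivedObj F n).hom),
    cancel_mono] at this

theorem isZero_leftDerived_obj_of_isIso_app (θ : 𝟭 C ⟶ 𝟭 C) (hθ : ∀ X, F.map (θ.app X) = 0)
    (n : ℕ) (X : C) [IsIso (θ.app X)] : IsZero ((F.leftDerived n).obj X) := by
  have hzero := F.leftDerived_map_app_eq_zero θ hθ n X
  refine (IsZero.iff_id_eq_zero _).2 ?_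
  have hinv : θ.app X ≫ CategoryTheory.inv (θ.app X) = 𝟙 X := IsIso.hom_inv_id _
  rw [← Functor.map_id, ← hinv, Functor.map_comp, hzero, zero_comp]

end CategoryTheory.Functor

namespace Rep

variable (k : Type) [CommRing k] {G : Type} [CommGroup G]

def applySubIdNatTrans (g : G) : 𝟭 (Rep k G) ⟶ 𝟭 (Rep k G) where
  app A := A.applyAsHom g - 𝟙 A
  naturality _ _ f := by
    simp [Preadditive.sub_comp, Preadditive.comp_sub, applyAsHom_comm]

variable {k}

theorem coinvFunctor_map_applySubIdNatTrans_app (g : G) (A : Rep k G) :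
    (coinvFunctor k G).map ((applySubIdNatTrans k g).app A) = 0 := by
  apply ModuleCat.hom_ext
  apply Submodule.linearMap_qext
  ext x
  exact (Submodule.Quotient.mk_eq_zero _).2 (Submodule.subset_span ⟨(g, x), rfl⟩)

theorem isIso_applySubIdNatTrans_app {g : G} {A : Rep k G}
    (h : Function.Bijective fun x => A.ρ g x - x) : IsIso ((applySubIdNatTrans k g).app A) :=
  (ConcreteCategory.isIso_iff_bijective _).2 h

end Rep

theorem exists_ne_zero_and_sq_ne_one {K : Type*} [Ring K] [NoZeroDivisors K]
    (h : 3 < Cardinal.mk K) : ∃ r : K, r ≠ 0 ∧ r ^ 2 ≠ 1 := by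
  obtain ⟨r, hr⟩ := Cardinal.exists_notMem_of_length_lt [(0 : K), 1, -1] (by simpa using h)
  simp only [List.mem_cons, List.not_mem_nil, or_false, not_or] at hr
  exact ⟨r, hr.1, by rw [sq, Ne, mul_self_eq_one_iff]; tauto⟩

theorem IsLocalRing.exists_isUnit_sq_sub_one {A : Type*} [CommRing A] [IsLocalRing A]
    (h : 3 < Cardinal.mk (ResidueField A)) : ∃ u : Aˣ, IsUnit ((u : A) ^ 2 - 1) := by
  obtain ⟨r, hr0, hr⟩ := exists_ne_zero_and_sq_ne_one h
  obtain ⟨a, rfl⟩ := residue_surjective r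
  have ha : IsUnit a := (residue_ne_zero_iff_isUnit a).1 hr0
  refine ⟨ha.unit, (residue_ne_zero_iff_isUnit _).1 ?_⟩
  rwa [IsUnit.unit_spec, map_sub, map_pow, map_one, sub_ne_zero]

theorem isIso_applySubIdNatTrans_app_squareRep {A : Type} [CommRing A] {u : Aˣ}
    (hu : IsUnit ((u : A) ^ 2 - 1)) :
    IsIso ((Rep.applySubIdNatTrans ℤ u).app (Rep.of (squareRep A))) := by
  refine Rep.isIso_applySubIdNatTrans_app ?_
  convert IsUnit.isUnit_iff_mulLeft_bijective.1 hu using 1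
  ext x
  show (u : A) ^ 2 * x - x = ((u : A) ^ 2 - 1) * x
  ring

/-- Let `A` be a commutative local ring whose residue field has more than
`3` elements.  With `Aˣ` acting on the additive group of `A` by `a · x = a²x`, the group
homology `H_i(Aˣ, A)` (the `i`-th left derived functor of the coinvariants functor)
vanishes for all `i ≥ 0`. -/
theorem homology_units_square_action_vanishes (A : Type) [CommRing A] [IsLocalRing A]
    (h : 3 < Cardinal.mk (IsLocalRing.ResidueField A)) (i : ℕ) :
    Subsingleton (((coinvFunctor ℤ Aˣ).leftDerived i).obj (Rep.of (squareRep A))) := by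
  obtain ⟨u, hu⟩ := IsLocalRing.exists_isUnit_sq_sub_one h
  have := isIso_applySubIdNatTrans_app_squareRep hu
  exact ModuleCat.subsingleton_of_isZero <| (coinvFunctor ℤ Aˣ).isZero_leftDerived_obj_of_isIso_app
    _ (Rep.coinvFunctor_map_applySubIdNatTrans_app u) i _
end
end

section
/- Let A be a commutative local ring with maximal ideal m_A and let I be the ideal of A generated by the set {a² − 1 : a ∈ A^×}. If the residue field A/m_A has more than 3 elements, then I = A. If A/m_A has exactly 3 elements, then I = m_A. -/
/-! Modulo `m_A` the generators `u² - 1` become `x² - 1` for nonzero `x` in the residue field `k`.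
If `|k| > 3` some such `x` differs from `0, 1, -1`, so `x² - 1` is a unit and `I = A`. If `|k| = 3`
then `x² = 1` for all `x ≠ 0`, so `I ⊆ m_A`; conversely `2` is a unit and every `m ∈ m_A` equals
`((1 + m)² - 1) - ((1 - m)² - 1) - (2² - 1) m`, a combination of generators. -/

open IsLocalRing

theorem exists_ne_zero_sq_ne_one_of_three_lt_mk {R : Type*} [Ring R] [NoZeroDivisors R]
    (h : 3 < Cardinal.mk R) : ∃ x : R, x ≠ 0 ∧ x ^ 2 ≠ 1 := by
  classical
  by_contra! hR
  have hsub : (Set.univ : Set R) ⊆ (({0, 1, -1} : Finset R) : Set R) := fun x _ => by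
    by_cases hx : x = 0
    · simp [hx]
    · simpa [hx] using sq_eq_one_iff.mp (hR x hx)
  have := Cardinal.mk_le_mk_of_subset hsub
  rw [Cardinal.mk_univ, Finset.coe_sort_coe, Cardinal.mk_coe_finset] at this
  exact h.not_ge (this.trans (by exact_mod_cast Finset.card_le_three))

theorem two_ne_zero_of_card_eq_three {K : Type*} [Field K] [Fintype K] (h : Fintype.card K = 3) :
    (2 : K) ≠ 0 := by
  have h3 : (3 : K) = 0 := by exact_mod_cast h ▸ FiniteField.cast_card_eq_zero K
  have h2 : (2 : K) = -1 := by linear_combination h3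
  simp [h2]

variable (A : Type*) [CommRing A]

def sqSubOneIdeal : Ideal A := Ideal.span (Set.range fun a : Aˣ => (a : A) ^ 2 - 1)

variable {A}

theorem sq_sub_one_mem_sqSubOneIdeal (u : Aˣ) : (u : A) ^ 2 - 1 ∈ sqSubOneIdeal A :=
  Ideal.subset_span ⟨u, rfl⟩

variable [IsLocalRing A]

theorem sqSubOneIdeal_eq_top_of_residue_sq_ne_one (u : Aˣ) (hu : residue A u ^ 2 ≠ 1) :
    sqSubOneIdeal A = ⊤ := by
  refine Ideal.eq_top_of_isUnit_mem _ (sq_sub_one_mem_sqSubOneIdeal u) ?_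
  rw [← residue_ne_zero_iff_isUnit, map_sub, map_pow, map_one]
  exact sub_ne_zero.mpr hu

theorem sqSubOneIdeal_le_maximalIdeal (h : ∀ u : Aˣ, residue A u ^ 2 = 1) :
    sqSubOneIdeal A ≤ maximalIdeal A := by
  rw [sqSubOneIdeal, Ideal.span_le]
  rintro _ ⟨u, rfl⟩
  rw [SetLike.mem_coe, ← residue_eq_zero_iff, map_sub, map_pow, map_one, h u, sub_self]

theorem maximalIdeal_le_sqSubOneIdeal (h2 : IsUnit (2 : A)) :
    maximalIdeal A ≤ sqSubOneIdeal A := by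
  intro m hm
  obtain ⟨u, hu⟩ : IsUnit (1 + m) := by
    simpa using isUnit_one_sub_self_of_mem_nonunits (-m) (neg_mem hm)
  obtain ⟨v, hv⟩ : IsUnit (1 - m) := isUnit_one_sub_self_of_mem_nonunits m hm
  obtain ⟨w, hw⟩ := h2
  have hcomb : m = ((u : A) ^ 2 - 1) - ((v : A) ^ 2 - 1) - ((w : A) ^ 2 - 1) * m := by
    rw [hu, hv, hw]; ring
  rw [hcomb]
  exact sub_mem (sub_mem (sq_sub_one_mem_sqSubOneIdeal u) (sq_sub_one_mem_sqSubOneIdeal v))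
    (Ideal.mul_mem_right _ _ (sq_sub_one_mem_sqSubOneIdeal w))

/-- Let `A` be a commutative local ring and let `I` be the ideal generated
by `{a² − 1 : a ∈ Aˣ}`.  If the residue field has more than `3` elements then `I = A`;
if the residue field has exactly `3` elements then `I = m_A`. -/
theorem ideal_span_sq_sub_one (A : Type) [CommRing A] [IsLocalRing A] :
    (3 < Cardinal.mk (IsLocalRing.ResidueField A) →
      Ideal.span (Set.range fun a : Aˣ => (a : A) ^ 2 - 1) = ⊤) ∧
    (Nat.card (IsLocalRing.ResidueField A) = 3 →
      Ideal.span (Set.range fun a : Aˣ => (a : A) ^ 2 - 1) = IsLocalRing.maximalIdeal A) := by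
  refine ⟨fun h3 => ?_, fun h3 => ?_⟩
  · obtain ⟨x, hx0, hx⟩ := exists_ne_zero_sq_ne_one_of_three_lt_mk h3
    obtain ⟨a, rfl⟩ := residue_surjective x
    exact sqSubOneIdeal_eq_top_of_residue_sq_ne_one
      ((residue_ne_zero_iff_isUnit a).mp hx0).unit hx
  · have : Finite (ResidueField A) := Nat.finite_of_card_ne_zero (by omega)
    let _ := Fintype.ofFinite (ResidueField A)
    have hcard : Fintype.card (ResidueField A) = 3 := by rw [← Nat.card_eq_fintype_card, h3]
    have hunit (u : Aˣ) : residue A u ^ 2 = 1 := by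
      simpa [hcard] using FiniteField.pow_card_sub_one_eq_one _ (u.isUnit.map (residue A)).ne_zero
    have h2 : IsUnit (2 : A) := by
      simpa using (residue_ne_zero_iff_isUnit (2 : A)).mp (two_ne_zero_of_card_eq_three hcard)
    exact (sqSubOneIdeal_le_maximalIdeal hunit).antisymm (maximalIdeal_le_sqSubOneIdeal h2)
end
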